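/- arXiv:2010.11410 — 2 statements merged into one kernel-verified Lean document; each statement's English description precedes it below -/
import Mathlib

section
/- Let f = D_{x,y} : [a,b] → X be the Dirichlet-type function taking value x at rationals and y at irrationals in [a,b], where d(x,y) > 0. Then for every ε with 0 < ε < d(x,y)/2, V_ε(f,[a,b]) = ∞, and for every ε ≥ d(x,y), V_ε(f,[a,b]) = 0. -/
/-! For `ε < d(x, y) / 2`, an `ε`-approximation `g` of the Dirichlet function still moves by at
least `d(x, y) - 2ε` between a rational and an irrational point, and since rationals and
irrationals are both dense, `[a, b]` contains alternating partitions with arbitrarily many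
points; so `g` has infinite variation. For `ε ≥ d(x, y)` the constant function `y` is an
`ε`-approximation of variation zero. -/

open Filter Set

noncomputable def jordanVar {X : Type*} [PseudoMetricSpace X] (f : ℝ → X) (S : Set ℝ) : ENNReal :=
  ⨆ (n : ℕ) (t : Fin (n+1) → ℝ) (_ : Monotone t) (_ : ∀ i, t i ∈ S),
    ∑ i : Fin n, edist (f (t i.succ)) (f (t i.castSucc))

noncomputable def appVar {X : Type*} [PseudoMetricSpace X] (ε : ℝ) (f : ℝ → X) (S : Set ℝ) : ENNReal :=
  ⨅ (g : ℝ → X) (_ : jordanVar g S < ⊤) (_ : ∀ t ∈ S, dist (f t) (g t) ≤ ε), jordanVar g S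

section Variation

variable {X : Type*} [PseudoMetricSpace X]

theorem sum_edist_le_jordanVar {g : ℝ → X} {S : Set ℝ} {n : ℕ} {t : Fin (n + 1) → ℝ}
    (ht : Monotone t) (hS : ∀ i, t i ∈ S) :
    ∑ i : Fin n, edist (g (t i.succ)) (g (t i.castSucc)) ≤ jordanVar g S :=
  le_iSup_of_le n <| le_iSup_of_le t <| le_iSup_of_le ht <| le_iSup_of_le hS le_rfl

theorem jordanVar_const (p : X) (S : Set ℝ) : jordanVar (fun _ => p) S = 0 := by
  simp [jordanVar]

theorem jordanVar_eq_top_of_forall_le_dist {g : ℝ → X} {S : Set ℝ} {c : ℝ} (hc : 0 < c)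
    (h : ∀ n : ℕ, ∃ t : Fin (n + 1) → ℝ, Monotone t ∧ (∀ i, t i ∈ S) ∧
      ∀ i : Fin n, c ≤ dist (g (t i.succ)) (g (t i.castSucc))) :
    jordanVar g S = ⊤ := by
  refine ENNReal.eq_top_of_forall_nnreal_le fun r => ?_
  obtain ⟨n, hn⟩ := exists_nat_ge ((r : ℝ) / c)
  obtain ⟨t, ht, hS, hdist⟩ := h n
  calc (r : ENNReal) = ENNReal.ofReal (r : ℝ) := (ENNReal.ofReal_coe_nnreal).symm
    _ ≤ ENNReal.ofReal (n * c) := ENNReal.ofReal_le_ofReal ((div_le_iff₀ hc).mp hn)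
    _ = ∑ _i : Fin n, ENNReal.ofReal c := by
      rw [ENNReal.ofReal_mul (Nat.cast_nonneg n), ENNReal.ofReal_natCast]; simp
    _ ≤ ∑ i : Fin n, edist (g (t i.succ)) (g (t i.castSucc)) :=
      Finset.sum_le_sum fun i _ => edist_dist (g (t i.succ)) _ ▸ ENNReal.ofReal_le_ofReal (hdist i)
    _ ≤ jordanVar g S := sum_edist_le_jordanVar ht hS

theorem appVar_le_jordanVar {ε : ℝ} {f g : ℝ → X} {S : Set ℝ} (hg : jordanVar g S < ⊤)
    (hfg : ∀ t ∈ S, dist (f t) (g t) ≤ ε) : appVar ε f S ≤ jordanVar g S :=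
  iInf_le_of_le g <| iInf_le_of_le hg <| iInf_le _ hfg

theorem appVar_eq_top {ε : ℝ} {f : ℝ → X} {S : Set ℝ}
    (h : ∀ g : ℝ → X, (∀ t ∈ S, dist (f t) (g t) ≤ ε) → jordanVar g S = ⊤) :
    appVar ε f S = ⊤ := by
  simp only [appVar, iInf_eq_top]
  exact fun g hg hfg => absurd (h g hfg) hg.ne

end Variation

theorem dist_sub_two_mul_le_dist {X : Type*} [PseudoMetricSpace X] {p q p' q' : X} {ε : ℝ}
    (hp : dist p p' ≤ ε) (hq : dist q q' ≤ ε) : dist p q - 2 * ε ≤ dist p' q' := by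
  have := (abs_le.mp (dist_dist_dist_le p q p' q')).2
  linarith

/-- The `i`-th point is taken in the `i`-th of `n + 1` equal subintervals of `(a, b)`. -/
theorem exists_strictMono_mem_dense {a b : ℝ} (hab : a < b) {n : ℕ} (s : Fin (n + 1) → Set ℝ)
    (hs : ∀ i, Dense (s i)) :
    ∃ t : Fin (n + 1) → ℝ, StrictMono t ∧ (∀ i, t i ∈ Icc a b) ∧ ∀ i, t i ∈ s i := by
  set h : ℝ := (b - a) / (n + 1)
  have hh : 0 < h := div_pos (by linarith) (by positivity)
  have hb : (n + 1) * h = b - a := by simp only [h]; field_simp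
  choose t hts ht using fun i : Fin (n + 1) =>
    (hs i).exists_between (x := a + i * h) (y := a + (i + 1) * h) (by nlinarith)
  refine ⟨t, Fin.strictMono_iff_lt_succ.mpr fun i => ?_, fun i => ⟨?_, ?_⟩, hts⟩
  · have h₁ := (ht i.castSucc).2
    have h₂ := (ht i.succ).1
    simp only [Fin.val_castSucc, Fin.val_succ, Nat.cast_add, Nat.cast_one] at h₁ h₂
    linarith
  · have := (ht i).1
    have : (0 : ℝ) ≤ i * h := by positivity
    linarith
  · have := (ht i).2
    have : ((i : ℕ) : ℝ) + 1 ≤ n + 1 := by exact_mod_cast i.isLt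
    nlinarith

theorem dense_setOf_irrational_iff (P : Prop) :
    Dense {t : ℝ | Irrational t ↔ P} := by
  by_cases hP : P
  · simpa [hP] using dense_irrational
  · refine Rat.denseRange_cast.mono ?_
    rintro _ ⟨q, rfl⟩
    simp [hP]

theorem exists_partition_dist_eq_of_dirichlet {X : Type*} [PseudoMetricSpace X] {x y : X}
    {a b : ℝ} (hab : a < b) {f : ℝ → X}
    (hf : ∀ t : ℝ, (Irrational t → f t = y) ∧ (¬ Irrational t → f t = x)) (n : ℕ) :
    ∃ t : Fin (n + 1) → ℝ, StrictMono t ∧ (∀ i, t i ∈ Icc a b) ∧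
      ∀ i : Fin n, dist (f (t i.succ)) (f (t i.castSucc)) = dist x y := by
  obtain ⟨t, ht, hmem, hirr⟩ := exists_strictMono_mem_dense hab
    (fun i => {t : ℝ | Irrational t ↔ ¬ Even (i : ℕ)}) fun i => dense_setOf_irrational_iff _
  have hval : ∀ i, f (t i) = if Even (i : ℕ) then x else y := by
    intro i
    split_ifs with he
    · exact (hf _).2 fun h => (hirr i).mp h he
    · exact (hf _).1 ((hirr i).mpr he)
  refine ⟨t, ht, hmem, fun i => ?_⟩
  rw [hval, hval, Fin.val_succ, Fin.val_castSucc]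
  by_cases he : Even (i : ℕ) <;> simp [he, Nat.even_add_one, dist_comm]

theorem stmt15_general {X : Type*} [PseudoMetricSpace X] (x y : X)
    (a b : ℝ) (hab : a < b) (f : ℝ → X)
    (hf : ∀ t : ℝ, (Irrational t → f t = y) ∧ (¬ Irrational t → f t = x)) :
    (∀ ε : ℝ, 0 < ε → ε < dist x y / 2 → appVar ε f (Set.Icc a b) = ⊤) ∧
    (∀ ε : ℝ, dist x y ≤ ε → appVar ε f (Set.Icc a b) = 0) := by
  refine ⟨fun ε _ hε => appVar_eq_top fun g hfg => ?_, fun ε hε => ?_⟩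
  · refine jordanVar_eq_top_of_forall_le_dist (c := dist x y - 2 * ε) (by linarith) fun n => ?_
    obtain ⟨t, ht, hmem, hdist⟩ := exists_partition_dist_eq_of_dirichlet hab hf n
    exact ⟨t, ht.monotone, hmem, fun i =>
      hdist i ▸ dist_sub_two_mul_le_dist (hfg _ (hmem _)) (hfg _ (hmem _))⟩
  · have hfy : ∀ t ∈ Icc a b, dist (f t) y ≤ ε := by
      intro t _
      by_cases ht : Irrational t
      · simpa [(hf t).1 ht] using dist_nonneg.trans hε
      · simpa [(hf t).2 ht] using hε
    have hconst := jordanVar_const y (Icc a b)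
    exact le_antisymm (hconst ▸ appVar_le_jordanVar (hconst ▸ ENNReal.zero_lt_top) hfy) bot_le

theorem stmt15 {X : Type*} [PseudoMetricSpace X] (x y : X) (hxy : 0 < dist x y)
    (a b : ℝ) (hab : a < b) (f : ℝ → X)
    (hf : ∀ t : ℝ, (Irrational t → f t = y) ∧ (¬ Irrational t → f t = x)) :
    (∀ ε : ℝ, 0 < ε → ε < dist x y / 2 → appVar ε f (Set.Icc a b) = ⊤) ∧
    (∀ ε : ℝ, dist x y ≤ ε → appVar ε f (Set.Icc a b) = 0) :=
  stmt15_general x y a b hab f hf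
end

section
/- Pointwise selection principle via approximate variation (metric case): let (X,d) be a metric space, T ⊆ ℝ nonempty, and f_j : T → X a sequence such that {f_j(t) : j ∈ ℕ} is relatively compact in X for each t ∈ T and limsup_j V_ε(f_j,T) < ∞ for every ε > 0. Then some subsequence of (f_j) converges pointwise on T to a function f : T → X that is bounded (has finite-diameter image) and regulated on T. -/
/-!
For each `k`, all large `j` admit a function `g` of variation at most `C k` that is uniformly
`1/(k+1)`-close to `F j`; its variation function `t ↦ V(g, T ∩ (-∞, t])` is nondecreasing and bounds
the increments of `F j` up to `2/(k+1)`. Along a free ultrafilter, `F j` and these variation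
functions converge at every point of `T`, to `f` and to monotone `ψ k`, and the control passes to
the limits; as monotone functions have one-sided limits, this makes `f` bounded and regulated. A
subsequence realises the ultrafilter limits on a countable set containing a dense subset of `T`, the
one-sided isolated points of `T` and the discontinuities of every `ψ k`. Any other point is squeezed
between nearby points of the dense subset across which the `ψ k` barely change, and convergence
there follows from the control.
-/

open Filter Set Topology

def RegulatedOn {X : Type*} [PseudoMetricSpace X] (f : ℝ → X) (T : Set ℝ) : Prop :=
  (∀ τ ∈ T, (∀ δ > 0, (T ∩ Set.Ioo (τ - δ) τ).Nonempty) →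
    ∀ η > 0, ∃ δ > 0, ∀ s ∈ T ∩ Set.Ioo (τ - δ) τ, ∀ u ∈ T ∩ Set.Ioo (τ - δ) τ,
      dist (f s) (f u) ≤ η) ∧
  (∀ τ ∈ T, (∀ δ > 0, (T ∩ Set.Ioo τ (τ + δ)).Nonempty) →
    ∀ η > 0, ∃ δ > 0, ∀ s ∈ T ∩ Set.Ioo τ (τ + δ), ∀ u ∈ T ∩ Set.Ioo τ (τ + δ),
      dist (f s) (f u) ≤ η)

theorem Monotone.snoc {α : Type*} [Preorder α] {n : ℕ} {p : Fin n → α} {x : α}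
    (hp : Monotone p) (hx : ∀ i, p i ≤ x) : Monotone (Fin.snoc (α := fun _ => α) p x) := by
  intro i j hij
  induction j using Fin.lastCases with
  | last =>
    induction i using Fin.lastCases with
    | last => exact le_rfl
    | cast i => simpa using hx i
  | cast j =>
    induction i using Fin.lastCases with
    | last => exact absurd hij (Fin.castSucc_lt_last j).not_ge
    | cast i => simpa using hp (Fin.castSucc_le_castSucc_iff.1 hij)

section JordanVariation

variable {X : Type*} [PseudoMetricSpace X]

theorem sum_le_jordanVar (f : ℝ → X) (S : Set ℝ) {n : ℕ} {t : Fin (n+1) → ℝ}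
    (ht : Monotone t) (htS : ∀ i, t i ∈ S) :
    ∑ i : Fin n, edist (f (t i.succ)) (f (t i.castSucc)) ≤ jordanVar f S :=
  le_iSup_of_le n <| le_iSup_of_le t <| le_iSup_of_le ht <| le_iSup_of_le htS le_rfl

theorem jordanVar_le {f : ℝ → X} {S : Set ℝ} {M : ENNReal}
    (h : ∀ (n : ℕ) (t : Fin (n+1) → ℝ), Monotone t → (∀ i, t i ∈ S) →
      ∑ i : Fin n, edist (f (t i.succ)) (f (t i.castSucc)) ≤ M) :
    jordanVar f S ≤ M :=
  iSup_le fun n => iSup_le fun t => iSup_le fun ht => iSup_le fun htS => h n t ht htS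

theorem jordanVar_mono (f : ℝ → X) {S S' : Set ℝ} (h : S ⊆ S') :
    jordanVar f S ≤ jordanVar f S' :=
  jordanVar_le fun _ _ ht htS => sum_le_jordanVar f S' ht fun i => h (htS i)

theorem sum_edist_snoc (f : ℝ → X) {n : ℕ} (t : Fin (n+1) → ℝ) (x : ℝ) :
    ∑ i : Fin (n+1), edist (f (Fin.snoc (α := fun _ => ℝ) t x i.succ))
        (f (Fin.snoc (α := fun _ => ℝ) t x i.castSucc)) =
      ∑ i : Fin n, edist (f (t i.succ)) (f (t i.castSucc)) + edist (f x) (f (t (Fin.last n))) := by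
  rw [Fin.sum_univ_castSucc, Fin.succ_last, Fin.snoc_last, Fin.snoc_castSucc]
  simp only [Fin.succ_castSucc, Fin.snoc_castSucc]

theorem jordanVar_inter_Iic_add_edist_le (g : ℝ → X) {T : Set ℝ} {s u : ℝ} (hs : s ∈ T)
    (hu : u ∈ T) (hsu : s ≤ u) :
    jordanVar g (T ∩ Iic s) + edist (g s) (g u) ≤ jordanVar g (T ∩ Iic u) := by
  -- a partition of `T ∩ Iic s` extended by the two points `s ≤ u` is a partition of `T ∩ Iic u`
  have extend : ∀ (n : ℕ) (t : Fin (n+1) → ℝ), Monotone t → (∀ i, t i ∈ T ∩ Iic s) →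
      ∑ i : Fin n, edist (g (t i.succ)) (g (t i.castSucc)) + edist (g s) (g u) ≤
        jordanVar g (T ∩ Iic u) := by
    intro n t ht htS
    have hts : ∀ i, Fin.snoc (α := fun _ => ℝ) t s i ≤ u := by
      rw [Fin.forall_fin_succ']
      simp only [Fin.snoc_castSucc, Fin.snoc_last]
      exact ⟨fun i => (htS i).2.trans hsu, hsu⟩
    have hmem : ∀ i,
        Fin.snoc (α := fun _ => ℝ) (Fin.snoc (α := fun _ => ℝ) t s) u i ∈ T ∩ Iic u := by
      rw [Fin.forall_fin_succ', Fin.forall_fin_succ']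
      simp only [Fin.snoc_castSucc, Fin.snoc_last]
      exact ⟨⟨fun i => ⟨(htS i).1, (htS i).2.trans hsu⟩, hs, hsu⟩, hu, mem_Iic.2 le_rfl⟩
    have hsum := sum_le_jordanVar g _ ((ht.snoc fun i => (htS i).2).snoc hts) hmem
    rw [sum_edist_snoc, sum_edist_snoc, Fin.snoc_last, edist_comm (g u)] at hsum
    exact le_trans (by gcongr; exact le_self_add) hsum
  have hsu_le : edist (g s) (g u) ≤ jordanVar g (T ∩ Iic u) := by
    simpa using extend 0 (fun _ => s) monotone_const fun _ => ⟨hs, mem_Iic.2 le_rfl⟩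
  refine add_le_of_le_tsub_right_of_le hsu_le (jordanVar_le fun n t ht htS => ?_)
  exact ENNReal.le_sub_of_add_le_right (edist_ne_top _ _) (extend n t ht htS)

theorem dist_le_toReal_jordanVar_sub {g : ℝ → X} {T : Set ℝ} (hg : jordanVar g T ≠ ⊤)
    {s u : ℝ} (hs : s ∈ T) (hu : u ∈ T) (hsu : s ≤ u) :
    dist (g s) (g u) ≤
      (jordanVar g (T ∩ Iic u)).toReal - (jordanVar g (T ∩ Iic s)).toReal := by
  have hfin : ∀ x, jordanVar g (T ∩ Iic x) ≠ ⊤ := fun x =>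
    ne_top_of_le_ne_top hg (jordanVar_mono g inter_subset_left)
  have := ENNReal.toReal_mono (hfin u) (jordanVar_inter_Iic_add_edist_le g hs hu hsu)
  rw [ENNReal.toReal_add (hfin s) (edist_ne_top _ _), ← dist_edist] at this
  linarith

theorem eventually_exists_jordanVar_le {ι : Type*} {l : Filter ι} {F : ι → ℝ → X} {T : Set ℝ}
    {ε : ℝ} (h : limsup (fun j => appVar ε (F j) T) l < ⊤) :
    ∃ C : ENNReal, C ≠ ⊤ ∧
      ∀ᶠ j in l, ∃ g : ℝ → X, jordanVar g T ≤ C ∧ ∀ t ∈ T, dist (F j t) (g t) ≤ ε := by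
  refine ⟨_ + 1, ENNReal.add_ne_top.2 ⟨h.ne, ENNReal.one_ne_top⟩, ?_⟩
  filter_upwards [eventually_lt_of_limsup_lt (ENNReal.lt_add_right h.ne one_ne_zero)] with j hj
  obtain ⟨g, hg⟩ := iInf_lt_iff.1 hj
  obtain ⟨-, hg⟩ := iInf_lt_iff.1 hg
  obtain ⟨hFg, hg⟩ := iInf_lt_iff.1 hg
  exact ⟨g, hg.le, hFg⟩

end JordanVariation

section Controlled

variable {X : Type*} [PseudoMetricSpace X]

def ControlledOn (h : ℝ → X) (v : ℝ → ℝ) (c : ℝ) (T : Set ℝ) : Prop :=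
  MonotoneOn v T ∧ ∀ s ∈ T, ∀ u ∈ T, s ≤ u → dist (h s) (h u) ≤ c + (v u - v s)

variable {h : ℝ → X} {v : ℝ → ℝ} {c : ℝ} {T : Set ℝ}

theorem controlledOn_toReal_jordanVar {g : ℝ → X} {ε : ℝ} (hg : jordanVar g T ≠ ⊤)
    (hhg : ∀ t ∈ T, dist (h t) (g t) ≤ ε) :
    ControlledOn h (fun t => (jordanVar g (T ∩ Iic t)).toReal) (2 * ε) T := by
  refine ⟨fun s _ u _ hsu => ENNReal.toReal_mono ?_ ?_, fun s hs u hu hsu => ?_⟩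
  · exact ne_top_of_le_ne_top hg (jordanVar_mono g inter_subset_left)
  · exact jordanVar_mono g (inter_subset_inter_right T (Iic_subset_Iic.2 hsu))
  calc dist (h s) (h u) ≤ dist (h s) (g s) + dist (g s) (g u) + dist (g u) (h u) :=
        dist_triangle4 _ _ _ _
    _ ≤ ε + ((jordanVar g (T ∩ Iic u)).toReal - (jordanVar g (T ∩ Iic s)).toReal) + ε := by
        gcongr
        · exact hhg s hs
        · exact dist_le_toReal_jordanVar_sub hg hs hu hsu
        · rw [dist_comm]; exact hhg u hu
    _ = _ := by ring

theorem ControlledOn.weaken (hh : ControlledOn h v c T) {d : ℝ} (hcd : c ≤ d) :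
    ControlledOn h v d T :=
  ⟨hh.1, fun s hs u hu hsu => (hh.2 s hs u hu hsu).trans (by linarith)⟩

theorem ControlledOn.dist_le (hh : ControlledOn h v c T) {s u : ℝ} (hs : s ∈ T) (hu : u ∈ T) :
    dist (h s) (h u) ≤ c + |v u - v s| := by
  rcases le_total s u with hsu | hus
  · exact (hh.2 s hs u hu hsu).trans (by gcongr; exact le_abs_self _)
  · rw [dist_comm, abs_sub_comm]
    exact (hh.2 u hu s hs hus).trans (by gcongr; exact le_abs_self _)

theorem ControlledOn.ediam_image_lt_top (hh : ControlledOn h v c T) {a b : ℝ}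
    (hv : ∀ t ∈ T, v t ∈ Icc a b) : Metric.ediam (h '' T) < ⊤ := by
  refine (Metric.isBounded_iff.2 ⟨c + (b - a), ?_⟩).ediam_ne_top.lt_top
  rintro _ ⟨s, hs, rfl⟩ _ ⟨u, hu, rfl⟩
  obtain ⟨⟨hau, hub⟩, ⟨has, hsb⟩⟩ := And.intro (hv u hu) (hv s hs)
  have : |v u - v s| ≤ b - a := abs_sub_le_iff.2 ⟨by linarith, by linarith⟩
  exact (hh.dist_le hs hu).trans (by linarith)

theorem ControlledOn.of_tendsto {ι : Type*} {l : Filter ι} [l.NeBot] {H : ι → ℝ → X}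
    {V : ι → ℝ → ℝ} {f : ℝ → X} {ψ : ℝ → ℝ} (hH : ∀ᶠ j in l, ControlledOn (H j) (V j) c T)
    (hf : ∀ t ∈ T, Tendsto (fun j => H j t) l (𝓝 (f t)))
    (hψ : ∀ t ∈ T, Tendsto (fun j => V j t) l (𝓝 (ψ t))) :
    ControlledOn f ψ c T := by
  refine ⟨fun s hs u hu hsu => ?_, fun s hs u hu hsu => ?_⟩
  · exact le_of_tendsto_of_tendsto (hψ s hs) (hψ u hu) (hH.mono fun j hj => hj.1 hs hu hsu)
  · exact le_of_tendsto_of_tendsto ((hf s hs).dist (hf u hu))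
      (tendsto_const_nhds.add ((hψ u hu).sub (hψ s hs))) (hH.mono fun j hj => hj.2 s hs u hu hsu)

theorem MonotoneOn.exists_abs_sub_lt_of_bddAbove {S : Set ℝ} (hv : MonotoneOn v S)
    (hS : S.Nonempty) (hbdd : BddAbove (v '' S)) {η : ℝ} (hη : 0 < η) :
    ∃ p ∈ S, ∀ s ∈ S, ∀ u ∈ S, p ≤ s → p ≤ u → |v u - v s| < η := by
  obtain ⟨_, ⟨p, hp, rfl⟩, hpv⟩ := exists_lt_of_lt_csSup (hS.image v) (sub_lt_self _ hη)
  refine ⟨p, hp, fun s hs u hu hps hpu => abs_sub_lt_iff.2 ⟨?_, ?_⟩⟩ <;>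
  linarith [hv hp hs hps, hv hp hu hpu, le_csSup hbdd (mem_image_of_mem v hs),
    le_csSup hbdd (mem_image_of_mem v hu)]

theorem MonotoneOn.exists_abs_sub_lt_of_bddBelow {S : Set ℝ} (hv : MonotoneOn v S)
    (hS : S.Nonempty) (hbdd : BddBelow (v '' S)) {η : ℝ} (hη : 0 < η) :
    ∃ p ∈ S, ∀ s ∈ S, ∀ u ∈ S, s ≤ p → u ≤ p → |v u - v s| < η := by
  obtain ⟨_, ⟨p, hp, rfl⟩, hpv⟩ := exists_lt_of_csInf_lt (hS.image v) (lt_add_of_pos_right _ hη)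
  refine ⟨p, hp, fun s hs u hu hsp hup => abs_sub_lt_iff.2 ⟨?_, ?_⟩⟩ <;>
  linarith [hv hs hp hsp, hv hu hp hup, csInf_le hbdd (mem_image_of_mem v hs),
    csInf_le hbdd (mem_image_of_mem v hu)]

theorem regulatedOn_of_controlledOn (hh : ∀ η > 0, ∃ v, ControlledOn h v η T) :
    RegulatedOn h T := by
  refine ⟨fun τ hτ hacc η hη => ?_, fun τ hτ hacc η hη => ?_⟩
  · obtain ⟨v, hv⟩ := hh (η / 2) (half_pos hη)
    have hbdd : BddAbove (v '' (T ∩ Iio τ)) :=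
      ⟨v τ, forall_mem_image.2 fun s hs => hv.1 hs.1 hτ hs.2.le⟩
    obtain ⟨p, hp, hpv⟩ := (hv.1.mono inter_subset_left).exists_abs_sub_lt_of_bddAbove
      ((hacc 1 one_pos).mono (inter_subset_inter_right T Ioo_subset_Iio_self)) hbdd (half_pos hη)
    refine ⟨τ - p, sub_pos.2 hp.2, fun s hs u hu => (hv.dist_le hs.1 hu.1).trans ?_⟩
    have hs' : p ≤ s := by linarith [hs.2.1]
    have hu' : p ≤ u := by linarith [hu.2.1]
    linarith [hpv s ⟨hs.1, hs.2.2⟩ u ⟨hu.1, hu.2.2⟩ hs' hu']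
  · obtain ⟨v, hv⟩ := hh (η / 2) (half_pos hη)
    have hbdd : BddBelow (v '' (T ∩ Ioi τ)) :=
      ⟨v τ, forall_mem_image.2 fun s hs => hv.1 hτ hs.1 hs.2.le⟩
    obtain ⟨p, hp, hpv⟩ := (hv.1.mono inter_subset_left).exists_abs_sub_lt_of_bddBelow
      ((hacc 1 one_pos).mono (inter_subset_inter_right T Ioo_subset_Ioi_self)) hbdd (half_pos hη)
    refine ⟨p - τ, sub_pos.2 hp.2, fun s hs u hu => (hv.dist_le hs.1 hu.1).trans ?_⟩
    have hs' : s ≤ p := by linarith [hs.2.2]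
    have hu' : u ≤ p := by linarith [hu.2.2]
    linarith [hpv s ⟨hs.1, hs.2.1⟩ u ⟨hu.1, hu.2.1⟩ hs' hu']

end Controlled

theorem tendsto_limUnder_of_isCompact {α Y : Type*} [TopologicalSpace Y] [Nonempty Y]
    (𝒰 : Ultrafilter α) {x : α → Y} {K : Set Y} (hK : IsCompact K) (hx : ∀ᶠ j in 𝒰, x j ∈ K) :
    Tendsto x 𝒰 (𝓝 (limUnder 𝒰 x)) := by
  obtain ⟨y, -, hy⟩ := hK.ultrafilter_le_nhds (𝒰.map x) (le_principal_iff.2 hx)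
  exact tendsto_nhds_limUnder ⟨y, hy⟩

theorem nhdsWithin_inter_neBot_of_subset_closure {α : Type*} [TopologicalSpace α]
    {D T U : Set α} {t : α} (hTD : T ⊆ closure D) (hU : IsOpen U) (h : (𝓝[T ∩ U] t).NeBot) :
    (𝓝[D ∩ U] t).NeBot := by
  rw [← mem_closure_iff_nhdsWithin_neBot] at h ⊢
  refine closure_minimal (fun x hx => ?_) isClosed_closure h
  rw [inter_comm D]
  exact hU.inter_closure ⟨hx.2, hTD hx.1⟩

theorem exists_sub_lt_of_continuousWithinAt {D T : Set ℝ} (hDT : D ⊆ T) (hTD : T ⊆ closure D)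
    {ψ : ℝ → ℝ} {t : ℝ} (hψ : ContinuousWithinAt ψ T t) (hl : (𝓝[T ∩ Iio t] t).NeBot)
    (hr : (𝓝[T ∩ Ioi t] t).NeBot) {η : ℝ} (hη : 0 < η) :
    ∃ s ∈ D, s ≤ t ∧ ∃ s' ∈ D, t ≤ s' ∧ ψ s' - ψ s < η := by
  have near : ∀ U, IsOpen U → (𝓝[T ∩ U] t).NeBot → ∃ s ∈ D ∩ U, dist (ψ s) (ψ t) < η / 2 := by
    intro U hU hTU
    have := nhdsWithin_inter_neBot_of_subset_closure hTD hU hTU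
    have hψ' := (hψ.mono (s := D ∩ U) (inter_subset_left.trans hDT)).eventually
      (Metric.ball_mem_nhds (ψ t) (half_pos hη))
    obtain ⟨s, hs, hsD⟩ := (hψ'.and self_mem_nhdsWithin).exists
    exact ⟨s, hsD, hs⟩
  obtain ⟨s, ⟨hsD, hst⟩, hs⟩ := near (Iio t) isOpen_Iio hl
  obtain ⟨s', ⟨hs'D, hts'⟩, hs'⟩ := near (Ioi t) isOpen_Ioi hr
  rw [Real.dist_eq, abs_lt] at hs hs'
  exact ⟨s, hsD, le_of_lt hst, s', hs'D, le_of_lt hts', by linarith [hs.1, hs'.2]⟩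

theorem tendsto_of_controlledOn {X : Type*} [PseudoMetricSpace X] {T D : Set ℝ}
    {F : ℕ → ℝ → X} {f : ℝ → X} {c : ℕ → ℝ} {v : ℕ → ℕ → ℝ → ℝ} {ψ : ℕ → ℝ → ℝ} (hDT : D ⊆ T)
    (hc : ∀ η > 0, ∃ k, c k < η) (hFv : ∀ k, ∀ᶠ n in atTop, ControlledOn (F n) (v k n) (c k) T)
    (hfψ : ∀ k, ControlledOn f (ψ k) (c k) T)
    (hFD : ∀ s ∈ D, Tendsto (fun n => F n s) atTop (𝓝 (f s)))
    (hvD : ∀ k, ∀ s ∈ D, Tendsto (fun n => v k n s) atTop (𝓝 (ψ k s))) {t : ℝ} (ht : t ∈ T)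
    (hsq : ∀ k, ∀ η > 0, ∃ s ∈ D, s ≤ t ∧ ∃ s' ∈ D, t ≤ s' ∧ ψ k s' - ψ k s < η) :
    Tendsto (fun n => F n t) atTop (𝓝 (f t)) := by
  refine Metric.tendsto_nhds.2 fun η hη => ?_
  have hη8 : 0 < η / 8 := by positivity
  obtain ⟨k, hk⟩ := hc _ hη8
  obtain ⟨s, hsD, hst, s', hs'D, hts', hψ⟩ := hsq k _ hη8
  have hs := hDT hsD
  have hs' := hDT hs'D
  filter_upwards [hFv k, Metric.tendsto_nhds.1 (hFD s hsD) _ hη8,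
    Metric.tendsto_nhds.1 (hvD k s hsD) _ hη8, Metric.tendsto_nhds.1 (hvD k s' hs'D) _ hη8]
    with n hn hFs hvs hvs'
  rw [Real.dist_eq, abs_lt] at hvs hvs'
  -- by monotonicity, the increments of `v k n` and `ψ k` from `s` to `t` are at most those to `s'`
  calc dist (F n t) (f t) ≤ dist (F n s) (F n t) + dist (F n s) (f s) + dist (f s) (f t) := by
        rw [dist_comm (F n s)]; exact dist_triangle4 _ _ _ _
    _ < η := by
      linarith [hn.2 s hs t ht hst, hn.1 ht hs' hts', (hfψ k).2 s hs t ht hst,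
        (hfψ k).1 ht hs' hts']

theorem exists_subseq_forall_tendsto {ι Y : Type*} [Countable ι] [PseudoMetricSpace Y]
    {l : Filter ℕ} [l.NeBot] (hl : l ≤ atTop) {x : ℕ → ι → Y} {y : ι → Y}
    (h : ∀ i, Tendsto (fun j => x j i) l (𝓝 (y i))) :
    ∃ φ : ℕ → ℕ, StrictMono φ ∧ ∀ i, Tendsto (fun n => x (φ n) i) atTop (𝓝 (y i)) :=
  let ⟨φ, hφ, hlim⟩ := ((tendsto_pi_nhds.2 h).mapClusterPt.mono hl).tendsto_subseq
  ⟨φ, hφ, tendsto_pi_nhds.1 hlim⟩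

theorem exists_subseq_tendsto_of_controlledOn {X : Type*} [PseudoMetricSpace X] {T : Set ℝ}
    {F : ℕ → ℝ → X} (hF : ∀ t ∈ T, IsCompact (closure (range fun j => F j t))) {c : ℕ → ℝ}
    (hc : ∀ η > 0, ∃ k, c k < η) {v : ℕ → ℕ → ℝ → ℝ} {K : ℕ → Set ℝ} (hK : ∀ k, IsCompact (K k))
    (hv : ∀ k, ∀ᶠ j in atTop, ControlledOn (F j) (v k j) (c k) T ∧ ∀ t ∈ T, v k j t ∈ K k) :
    ∃ φ : ℕ → ℕ, StrictMono φ ∧ ∃ f : ℝ → X,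
      (∀ t ∈ T, Tendsto (fun n => F (φ n) t) atTop (𝓝 (f t))) ∧
      ∃ ψ : ℕ → ℝ → ℝ, ∀ k, ControlledOn f (ψ k) (c k) T ∧ ∀ t ∈ T, ψ k t ∈ K k := by
  have : Nonempty X := ⟨F 0 0⟩
  let 𝒰 := hyperfilter ℕ
  have h𝒰 : (𝒰 : Filter ℕ) ≤ atTop := Nat.cofinite_eq_atTop ▸ hyperfilter_le_cofinite
  have hv𝒰 := fun k => (hv k).filter_mono h𝒰
  let f : ℝ → X := fun t => limUnder 𝒰 fun j => F j t
  let ψ : ℕ → ℝ → ℝ := fun k t => limUnder 𝒰 fun j => v k j t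
  have hf : ∀ t ∈ T, Tendsto (fun j => F j t) 𝒰 (𝓝 (f t)) := fun t ht =>
    tendsto_limUnder_of_isCompact 𝒰 (hF t ht) (.of_forall fun j => subset_closure ⟨j, rfl⟩)
  have hψ : ∀ k, ∀ t ∈ T, Tendsto (fun j => v k j t) 𝒰 (𝓝 (ψ k t)) := fun k t ht =>
    tendsto_limUnder_of_isCompact 𝒰 (hK k) ((hv𝒰 k).mono fun j hj => hj.2 t ht)
  have hfψ : ∀ k, ControlledOn f (ψ k) (c k) T := fun k =>
    .of_tendsto ((hv𝒰 k).mono fun _ hj => hj.1) hf (hψ k)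
  obtain ⟨D, hDT, hDc, hTD⟩ :=
    (TopologicalSpace.IsSeparable.of_separableSpace T).exists_countable_dense_subset
  let E := D ∪ ({x ∈ T | 𝓝[T ∩ Iio x] x = ⊥} ∪ {x ∈ T | 𝓝[T ∩ Ioi x] x = ⊥} ∪
    ⋃ k, {x ∈ T | ¬ContinuousWithinAt (ψ k) T x})
  have hE : E.Countable := hDc.union <| (countable_setOfPred_isolated_left_within.union
    countable_setOfPred_isolated_right_within).union <|
      countable_iUnion fun k => (hfψ k).1.countable_not_continuousWithinAt
  have hET : E ⊆ T := union_subset hDT <| union_subset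
    (union_subset (sep_subset _ _) (sep_subset _ _)) (iUnion_subset fun _ => sep_subset _ _)
  have := hE.to_subtype
  obtain ⟨φ, hφ, hφlim⟩ := exists_subseq_forall_tendsto h𝒰
    (x := fun j (p : E × ℕ) => (F j p.1, v p.2 j p.1)) (y := fun p => (f p.1, ψ p.2 p.1))
    fun p => (hf p.1 (hET p.1.2)).prodMk_nhds (hψ p.2 p.1 (hET p.1.2))
  have hFE : ∀ s ∈ E, Tendsto (fun n => F (φ n) s) atTop (𝓝 (f s)) := fun s hs =>
    (hφlim (⟨s, hs⟩, 0)).fst_nhds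
  have hvE : ∀ k, ∀ s ∈ E, Tendsto (fun n => v k (φ n) s) atTop (𝓝 (ψ k s)) := fun k s hs =>
    (hφlim (⟨s, hs⟩, k)).snd_nhds
  refine ⟨φ, hφ, f, fun t ht => ?_, ψ, fun k => ⟨hfψ k, fun t ht => ?_⟩⟩
  · by_cases htE : t ∈ E
    · exact hFE t htE
    simp only [E, mem_union, mem_iUnion, mem_ofPred_eq, not_or, not_and, not_not, not_exists] at htE
    refine tendsto_of_controlledOn hDT hc (fun k => (hφ.tendsto_atTop.eventually (hv k)).mono
      fun _ hj => hj.1) hfψ (fun s hs => hFE s (.inl hs)) (fun k s hs => hvE k s (.inl hs)) ht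
      fun k η hη => exists_sub_lt_of_continuousWithinAt hDT hTD (htE.2.2 k ht) ⟨htE.2.1.1 ht⟩
        ⟨htE.2.1.2 ht⟩ hη
  · exact (hK k).isClosed.mem_of_tendsto (hψ k t ht) ((hv𝒰 k).mono fun _ hj => hj.2 t ht)

theorem stmt19_general {X : Type*} [MetricSpace X] (T : Set ℝ)
    (F : ℕ → ℝ → X)
    (hcpt : ∀ t ∈ T, IsCompact (closure (Set.range fun j => F j t)))
    (hvar : ∀ ε : ℝ, 0 < ε →
      Filter.limsup (fun j => appVar ε (F j) T) Filter.atTop < ⊤) :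
    ∃ φ : ℕ → ℕ, StrictMono φ ∧ ∃ f : ℝ → X,
      (∀ t ∈ T, Filter.Tendsto (fun k => F (φ k) t) Filter.atTop (nhds (f t))) ∧
      EMetric.diam (f '' T) < ⊤ ∧ RegulatedOn f T := by
  have hc : ∀ η > 0, ∃ k : ℕ, 2 * (1 / ((k : ℝ) + 1)) < η := fun η hη => by
    obtain ⟨k, hk⟩ := exists_nat_one_div_lt (half_pos hη)
    exact ⟨k, by linarith⟩
  choose C hC hCF using fun k : ℕ =>
    eventually_exists_jordanVar_le (hvar (1 / ((k : ℝ) + 1)) Nat.one_div_pos_of_nat)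
  choose G hG using fun k => (hCF k).choice
  obtain ⟨φ, hφ, f, hf, ψ, hψ⟩ := exists_subseq_tendsto_of_controlledOn hcpt hc
    (K := fun k => Icc 0 (C k).toReal) (fun k => isCompact_Icc) fun k =>
      (hG k).mono fun j ⟨hGT, hFG⟩ =>
        ⟨controlledOn_toReal_jordanVar (ne_top_of_le_ne_top (hC k) hGT) hFG, fun t _ =>
          ⟨ENNReal.toReal_nonneg,
            ENNReal.toReal_mono (hC k) ((jordanVar_mono _ inter_subset_left).trans hGT)⟩⟩
  refine ⟨φ, hφ, f, hf, (hψ 0).1.ediam_image_lt_top (hψ 0).2,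
    regulatedOn_of_controlledOn fun η hη => ?_⟩
  obtain ⟨k, hk⟩ := hc η hη
  exact ⟨ψ k, (hψ k).1.weaken hk.le⟩

theorem stmt19 {X : Type*} [MetricSpace X] (T : Set ℝ) (hT : T.Nonempty)
    (F : ℕ → ℝ → X)
    (hcpt : ∀ t ∈ T, IsCompact (closure (Set.range fun j => F j t)))
    (hvar : ∀ ε : ℝ, 0 < ε →
      Filter.limsup (fun j => appVar ε (F j) T) Filter.atTop < ⊤) :
    ∃ φ : ℕ → ℕ, StrictMono φ ∧ ∃ f : ℝ → X,
      (∀ t ∈ T, Filter.Tendsto (fun k => F (φ k) t) Filter.atTop (nhds (f t))) ∧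
      EMetric.diam (f '' T) < ⊤ ∧ RegulatedOn f T :=
  stmt19_general T F hcpt hvar
end
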